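/- Let p_A be a random p-value (random through a data-splitting mechanism A given the data) such that, for an event {Data_A ∈ 𝒜} with P(Data_A ∈ 𝒜) ≥ 1 - γ, one has |P(p_A ≤ x | Data_A ∈ 𝒜) - x| ≤ δ for all x ∈ [0,1]. Define p_{.5} = lower median of p_A conditional on the data. Then under the null hypothesis, P(p_{.5} ≤ α/2) ≤ α + 2(δ + γ). -/

import Mathlib

open scoped ENNReal
open MeasureTheory ProbabilityTheory

/-- Lower median of `f` under the measure `ν`. -/
noncomputable def lMed {A : Type*} [MeasurableSpace A] (ν : Measure A) (f : A → ℝ) : ℝ :=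
  sInf {x : ℝ | (1 : ℝ≥0∞) / 2 ≤ ν {a | f a ≤ x}}

/-!
Since `x ↦ ν {f ≤ x}` is right-continuous and runs from `0` to `1`, the infimum defining the lower
median is attained, so `lMed ν f ≤ t` forces `ν {f ≤ t} ≥ 1/2`. Hence the data `ω` with
`p_{.5}(ω) ≤ α/2` are among those whose section of `T = {p ≤ α/2}` has `ν`-mass at least `1/2`,
and Markov's inequality bounds their probability by `2 (μ ⊗ ν)(T)`. Finally
`(μ ⊗ ν)(T) ≤ P(T | E) + P(Eᶜ) ≤ α/2 + δ + γ`.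
-/

open Filter Topology Set

section LowerMedian

variable {A : Type*} [MeasurableSpace A] {ν : Measure A} {f : A → ℝ}

lemma tendsto_measure_setOf_le_atTop :
    Tendsto (fun x => ν {a | f a ≤ x}) atTop (𝓝 (ν univ)) := by
  have hU : (⋃ x : ℝ, {a | f a ≤ x}) = univ :=
    eq_univ_of_forall fun a => mem_iUnion.2 ⟨f a, le_refl (f a)⟩
  rw [← hU]
  exact tendsto_measure_iUnion_atTop fun x y hxy a (ha : f a ≤ x) => ha.trans hxy

lemma tendsto_measure_setOf_le_atBot [IsFiniteMeasure ν] (hf : Measurable f) :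
    Tendsto (fun x => ν {a | f a ≤ x}) atBot (𝓝 0) := by
  have hI : (⋂ x : ℝ, {a | f a ≤ x}) = ∅ :=
    eq_empty_of_forall_notMem fun a ha => by
      have : f a ≤ f a - 1 := mem_iInter.1 ha (f a - 1)
      linarith
  rw [← measure_empty (μ := ν), ← hI]
  exact tendsto_measure_iInter_atBot
    (fun x => (measurableSet_le hf measurable_const).nullMeasurableSet)
    (fun x y hxy a (ha : f a ≤ x) => ha.trans hxy) ⟨0, measure_ne_top _ _⟩

lemma tendsto_measure_setOf_le_nhdsGT [IsFiniteMeasure ν] (hf : Measurable f) (t : ℝ) :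
    Tendsto (fun x => ν {a | f a ≤ x}) (𝓝[>] t) (𝓝 (ν {a | f a ≤ t})) := by
  have hI : (⋂ x > t, {a | f a ≤ x}) = {a | f a ≤ t} := by
    ext a
    simp only [mem_iInter, mem_ofPred_eq]
    exact ⟨le_of_forall_gt_imp_ge_of_dense, fun h x hx => h.trans hx.le⟩
  rw [← hI]
  exact tendsto_measure_biInter_gt
    (fun x _ => (measurableSet_le hf measurable_const).nullMeasurableSet)
    (fun x y _ hxy a (ha : f a ≤ x) => ha.trans hxy) ⟨t + 1, by linarith, measure_ne_top _ _⟩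

lemma bddBelow_setOf_half_le_measure [IsFiniteMeasure ν] (hf : Measurable f) :
    BddBelow {x : ℝ | (1 : ℝ≥0∞) / 2 ≤ ν {a | f a ≤ x}} := by
  obtain ⟨m, hm⟩ := eventually_atBot.1 <| (tendsto_measure_setOf_le_atBot (ν := ν) hf).eventually
    (gt_mem_nhds (by norm_num : (0 : ℝ≥0∞) < 1 / 2))
  exact ⟨m, fun x hx => le_of_not_gt fun hxm => (hm x hxm.le).not_ge hx⟩

lemma nonempty_setOf_half_le_measure [IsProbabilityMeasure ν] :
    {x : ℝ | (1 : ℝ≥0∞) / 2 ≤ ν {a | f a ≤ x}}.Nonempty := by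
  have hhalf : (1 : ℝ≥0∞) / 2 < ν univ := by
    rw [measure_univ]
    exact ENNReal.half_lt_self one_ne_zero ENNReal.one_ne_top
  obtain ⟨x, hx⟩ := (tendsto_measure_setOf_le_atTop.eventually (lt_mem_nhds hhalf)).exists
  exact ⟨x, hx.le⟩

lemma half_le_measure_of_lMed_le [IsProbabilityMeasure ν] (hf : Measurable f) {t : ℝ}
    (h : lMed ν f ≤ t) : (1 : ℝ≥0∞) / 2 ≤ ν {a | f a ≤ t} := by
  refine ge_of_tendsto (tendsto_measure_setOf_le_nhdsGT hf t) ?_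
  filter_upwards [self_mem_nhdsWithin] with r (hr : t < r)
  obtain ⟨x, hx, hxr⟩ := (csInf_lt_iff (bddBelow_setOf_half_le_measure hf)
    nonempty_setOf_half_le_measure).1 (h.trans_lt hr)
  exact hx.trans (measure_mono fun a (ha : f a ≤ x) => ha.trans hxr.le)

end LowerMedian

lemma mul_meas_ge_measure_prodMk_preimage_le_prod {α β : Type*} [MeasurableSpace α]
    [MeasurableSpace β] (μ : Measure α) (ν : Measure β) [SFinite ν] {s : Set (α × β)}
    (hs : MeasurableSet s) (c : ℝ≥0∞) :
    c * μ {x | c ≤ ν (Prod.mk x ⁻¹' s)} ≤ μ.prod ν s := by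
  rw [Measure.prod_apply hs]
  exact mul_meas_ge_le_lintegral (measurable_measure_prodMk_left hs) c

lemma measureReal_le_cond_add_compl {Ω : Type*} [MeasurableSpace Ω] (P : Measure Ω)
    [IsProbabilityMeasure P] {E : Set Ω} (hE : MeasurableSet E) (T : Set Ω) :
    P.real T ≤ P[|E].real T + P.real Eᶜ := by
  have hinter : P.real (E ∩ T) ≤ P[|E].real T := by
    rw [measureReal_def, ← cond_mul_eq_inter hE, ENNReal.toReal_mul]
    exact mul_le_of_le_one_right ENNReal.toReal_nonneg measureReal_le_one
  calc P.real T ≤ P.real (E ∩ T ∪ Eᶜ) :=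
        measureReal_mono fun q hq => (em (q ∈ E)).imp (fun hqE => ⟨hqE, hq⟩) id
    _ ≤ P.real (E ∩ T) + P.real Eᶜ := measureReal_union_le _ _
    _ ≤ P[|E].real T + P.real Eᶜ := by gcongr

theorem stmt9_general {Ω A : Type*} [MeasurableSpace Ω] [MeasurableSpace A]
    (μ : Measure Ω) (ν : Measure A) [IsProbabilityMeasure μ] [IsProbabilityMeasure ν]
    (pval : Ω × A → ℝ) (hpval : Measurable pval)
    (E : Set (Ω × A)) (hE : MeasurableSet E)
    (γ δ α : ℝ) (hγ : 0 ≤ γ) (hδ : 0 ≤ δ) (hα : 0 ≤ α)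
    (hEprob : 1 - γ ≤ ((μ.prod ν) E).toReal)
    (hunif : ∀ x ∈ Set.Icc (0 : ℝ) 1,
      |(((μ.prod ν)[|E]) {q | pval q ≤ x}).toReal - x| ≤ δ) :
    μ {ω | lMed ν (fun a => pval (ω, a)) ≤ α / 2} ≤ ENNReal.ofReal (α + 2 * (δ + γ)) := by
  rcases le_or_gt 1 (α + 2 * (δ + γ)) with hbig | hsmall
  · exact prob_le_one.trans (ENNReal.one_le_ofReal.2 hbig)
  set T := {q | pval q ≤ α / 2}
  have hT : MeasurableSet T := measurableSet_le hpval measurable_const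
  have hcond : (μ.prod ν)[|E].real T ≤ α / 2 + δ :=
    sub_le_iff_le_add'.1 (abs_le.1 (hunif (α / 2) ⟨by linarith, by linarith⟩)).2
  have hcompl : (μ.prod ν).real Eᶜ ≤ γ := by
    rw [probReal_compl_eq_one_sub hE]
    exact sub_le_comm.1 hEprob
  set S := {ω | (1 : ℝ≥0∞) / 2 ≤ ν (Prod.mk ω ⁻¹' T)}
  have hmedian : {ω | lMed ν (fun a => pval (ω, a)) ≤ α / 2} ⊆ S := fun ω hω =>
    half_le_measure_of_lMed_le (hpval.comp measurable_prodMk_left) hω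
  have hmarkov : μ.real S ≤ 2 * (μ.prod ν).real T := by
    have h := ENNReal.toReal_mono (measure_ne_top _ _) <|
      mul_meas_ge_measure_prodMk_preimage_le_prod μ ν hT (1 / 2)
    rw [ENNReal.toReal_mul, ENNReal.toReal_div, ENNReal.toReal_one, ENNReal.toReal_ofNat,
      ← measureReal_def, ← measureReal_def] at h
    linarith
  calc μ {ω | lMed ν (fun a => pval (ω, a)) ≤ α / 2} ≤ μ S := measure_mono hmedian
    _ = ENNReal.ofReal (μ.real S) := (ofReal_measureReal).symm
    _ ≤ ENNReal.ofReal (α + 2 * (δ + γ)) := by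
      gcongr
      linarith [measureReal_le_cond_add_compl (μ.prod ν) hE T]

/-- Uniform validity of the variational p-value: if the split-dependent p-value is
approximately uniform conditional on a regular event of probability at least `1 - γ`,
then the data-wise lower median p-value satisfies
`P(p_{.5} ≤ α/2) ≤ α + 2(δ + γ)`. -/
theorem stmt9 {Ω A : Type*} [MeasurableSpace Ω] [MeasurableSpace A]
    (μ : Measure Ω) (ν : Measure A) [IsProbabilityMeasure μ] [IsProbabilityMeasure ν]
    (pval : Ω × A → ℝ) (hpval : Measurable pval)
    (hp01 : ∀ q, pval q ∈ Set.Icc (0 : ℝ) 1)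
    (E : Set (Ω × A)) (hE : MeasurableSet E)
    (γ δ α : ℝ) (hγ : 0 ≤ γ) (hδ : 0 ≤ δ) (hα : 0 ≤ α)
    (hEprob : 1 - γ ≤ ((μ.prod ν) E).toReal)
    (hunif : ∀ x ∈ Set.Icc (0 : ℝ) 1,
      |(((μ.prod ν)[|E]) {q | pval q ≤ x}).toReal - x| ≤ δ) :
    μ {ω | lMed ν (fun a => pval (ω, a)) ≤ α / 2} ≤ ENNReal.ofReal (α + 2 * (δ + γ)) :=
  stmt9_general μ ν pval hpval E hE γ δ α hγ hδ hα hEprob hunif
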